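/- Let a = (i/2)·diag(I_k, −I_{n−k}), let g : ℝ → U(n) be smooth with u := g⁻¹g_x taking values in u(n)_a^⊥, and set γ := g a g⁻¹. Then γ_x = g[u, a]g⁻¹, γ_xx = g([u_x, a] + [u, [u, a]])g⁻¹, and [γ, γ_xx] = g u_x g⁻¹. -/

import Mathlib

open Matrix

attribute [local instance] Matrix.normedAddCommGroup Matrix.normedSpace

/-- The centralizer `u(n)_a = {y ∈ u(n) : [y,a] = 0}` of `a` in `u(n)`. -/
def uCent {ι : Type*} [Fintype ι] (a : Matrix ι ι ℂ) : Set (Matrix ι ι ℂ) :=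
  {y | yᴴ = -y ∧ y * a = a * y}

/-- The orthogonal complement `u(n)_a^⊥` of `u(n)_a` in `u(n)` w.r.t. `⟨x,y⟩ = −tr(xy)`. -/
def uPerp {ι : Type*} [Fintype ι] (a : Matrix ι ι ℂ) : Set (Matrix ι ι ℂ) :=
  {y | yᴴ = -y ∧ ∀ z ∈ uCent a, -(y * z).trace = 0}

/-! Writing `g_x = g u` and `(g⁻¹)_x = -u g⁻¹` (as `u` is skew-Hermitian), every conjugate
`g F g⁻¹` has derivative `g (F_x + [u, F]) g⁻¹`; applied to `F = a` and `F = [u, a]` this gives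
the formulas for `γ_x` and `γ_xx`. Since `a² = -1/4`, the component `½(u - 4aua)` of `u`
commutes with `a` and is orthogonal to the rest, so `u ⊥ u(n)_a` forces it to vanish: `u`, and
hence `u_x`, anticommutes with `a`. Then `[a, [u_x, a]] = u_x` and `[a, [u, [u, a]]] = 0`, and
conjugating by `g` gives `[γ, γ_xx] = g u_x g⁻¹`. -/

section MatrixCalculus

variable {𝕜 R : Type*} [NontriviallyNormedField 𝕜] [NormedRing R] [NormedAlgebra 𝕜 R]
  {l m n : Type*} {x : 𝕜}

theorem hasDerivAt_matrix_iff [Fintype n] {f : 𝕜 → Matrix m n R} {f' : Matrix m n R} :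
    HasDerivAt f f' x ↔ ∀ i j, HasDerivAt (fun t => f t i j) (f' i j) x :=
  ⟨fun h i j => hasDerivAt_pi.1 (hasDerivAt_pi.1 h i) j,
    fun h => hasDerivAt_pi.2 fun i => hasDerivAt_pi.2 fun j => h i j⟩

theorem HasDerivAt.matrix_mul [Fintype m] [Fintype n] {f : 𝕜 → Matrix l m R}
    {g : 𝕜 → Matrix m n R} {f' : Matrix l m R} {g' : Matrix m n R}
    (hf : HasDerivAt f f' x) (hg : HasDerivAt g g' x) :
    HasDerivAt (fun t => f t * g t) (f' * g x + f x * g') x := by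
  rw [hasDerivAt_matrix_iff] at *
  intro i j
  simp only [Matrix.add_apply, Matrix.mul_apply, ← Finset.sum_add_distrib]
  exact HasDerivAt.fun_sum fun k _ => (hf i k).fun_mul (hg k j)

theorem HasDerivAt.mul_eq_neg_mul_of_forall [Fintype n] {u : 𝕜 → Matrix n n R}
    {u' a : Matrix n n R} (hu : HasDerivAt u u' x) (h : ∀ t, u t * a = -(a * u t)) :
    u' * a = -(a * u') := by
  have hsum : HasDerivAt (fun t => u t * a + a * u t) (u' * a + a * u') x :=
    ((hu.matrix_mul (hasDerivAt_const x a)).fun_add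
      ((hasDerivAt_const x a).matrix_mul hu)).congr_deriv (by simp)
  have hzero : (fun t => u t * a + a * u t) = fun _ => 0 := funext fun t => by
    rw [h t, neg_add_cancel]
  rw [hzero] at hsum
  exact eq_neg_of_add_eq_zero_left (hsum.unique (hasDerivAt_const x 0))

end MatrixCalculus

section Conjugation

variable {ι : Type*} [Fintype ι]

theorem HasDerivAt.mul_mul_star {g F : ℝ → Matrix ι ι ℂ} {U F' : Matrix ι ι ℂ} {x : ℝ}
    (hg : HasDerivAt g (g x * U) x) (hU : star U = -U) (hF : HasDerivAt F F' x) :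
    HasDerivAt (fun t => g t * F t * star (g t))
      (g x * (F' + (U * F x - F x * U)) * star (g x)) x := by
  refine ((hg.matrix_mul hF).matrix_mul hg.star).congr_deriv ?_
  rw [star_mul, hU]
  noncomm_ring

theorem commutator_conj_of_mul_eq_one {A : Type*} [Ring A] {g h : A} (hg : h * g = 1) (P Q : A) :
    g * P * h * (g * Q * h) - g * Q * h * (g * P * h) = g * (P * Q - Q * P) * h := by
  have hcancel : ∀ w, h * (g * w) = w := fun w => by rw [← mul_assoc, hg, one_mul]
  simp only [mul_assoc, hcancel]
  noncomm_ring

theorem differentiable_star_mul_deriv {g : ℝ → Matrix ι ι ℂ} (hg : ContDiff ℝ 2 g) :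
    Differentiable ℝ fun x => star (g x) * deriv g x :=
  fun x => ((hg.differentiable two_ne_zero x).hasDerivAt.star.matrix_mul
    (hg.differentiable_deriv_two x).hasDerivAt).differentiableAt

end Conjugation

section Anticommutation

variable {ι : Type*} [Fintype ι] [DecidableEq ι]

theorem trace_mul_eq_zero_of_anticomm_of_comm {R : Type*} [Field R] [NeZero (2 : R)]
    {a w z : Matrix ι ι R} {c : R} (hc : c ≠ 0) (ha : a * a = c • 1)
    (hw : w * a = -(a * w)) (hz : z * a = a * z) : (w * z).trace = 0 := by
  have haw : a * w = -(w * a) := by rw [hw, neg_neg]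
  have h : (w * z * (a * a)).trace = -(w * z * (a * a)).trace := by
    calc (w * z * (a * a)).trace = (a * (w * z * a)).trace := by
          rw [← mul_assoc, trace_mul_comm]
      _ = -(w * z * (a * a)).trace := by
          rw [← trace_neg]
          congr 1
          rw [← mul_assoc, ← mul_assoc, haw, neg_mul, neg_mul, mul_assoc w a z, ← hz]
          simp only [mul_assoc]
  rw [ha, mul_smul_comm, mul_one, trace_smul, smul_eq_mul, eq_neg_iff_add_eq_zero, ← two_mul,
    mul_eq_zero, mul_eq_zero] at h
  simpa [hc, two_ne_zero] using h

theorem mul_eq_neg_mul_of_mem_uPerp {a y : Matrix ι ι ℂ} {c : ℝ} (hc : c ≠ 0) (haH : aᴴ = -a)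
    (ha : a * a = (c : ℂ) • 1) (hy : y ∈ uPerp a) : y * a = -(a * y) := by
  obtain ⟨hyH, hyperp⟩ := hy
  have hc' : (c : ℂ) ≠ 0 := Complex.ofReal_ne_zero.2 hc
  have haya : a * y * a * a = (c : ℂ) • (a * y) := by
    rw [mul_assoc _ a a, ha, mul_smul_comm, mul_one]
  have aaya : a * (a * y * a) = (c : ℂ) • (y * a) := by
    rw [← mul_assoc, ← mul_assoc, ha, smul_mul_assoc, smul_mul_assoc, one_mul]
  -- `z` is the orthogonal projection of `y` onto the centralizer of `a`
  set z : Matrix ι ι ℂ := (2⁻¹ : ℂ) • (y + (c : ℂ)⁻¹ • (a * y * a)) with hz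
  have hzH : zᴴ = -z := by
    simp only [hz, conjTranspose_smul, conjTranspose_add, conjTranspose_mul, haH, hyH,
      Matrix.neg_mul, Matrix.mul_neg, neg_neg, star_inv₀, Complex.star_def, Complex.conj_ofReal,
      map_ofNat, mul_assoc]
    module
  have hza : z * a = a * z := by
    simp only [hz, smul_mul_assoc, mul_smul_comm, add_mul, mul_add, haya, aaya, smul_smul,
      inv_mul_cancel₀ hc']
    module
  have hw : (y - z) * a = -(a * (y - z)) := by
    simp only [hz, sub_mul, mul_sub, smul_mul_assoc, mul_smul_comm, add_mul, mul_add, haya, aaya,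
      smul_smul, inv_mul_cancel₀ hc']
    module
  have hzz : (z * z).trace = 0 := by
    have hyz : (y * z).trace = 0 := neg_eq_zero.1 (hyperp z ⟨hzH, hza⟩)
    have horth := trace_mul_eq_zero_of_anticomm_of_comm hc' ha hw hza
    rwa [sub_mul, trace_sub, hyz, zero_sub, neg_eq_zero] at horth
  have hz0 : z = 0 := by
    open scoped ComplexOrder in
    rw [← trace_conjTranspose_mul_self_eq_zero_iff, hzH, neg_mul, trace_neg, hzz, neg_zero]
  simpa [hz0] using hw

theorem commutator_add_double_commutator_of_anticomm {R : Type*} [CommRing R]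
    {a u v : Matrix ι ι R} {c : R} (ha : a * a = c • 1) (hu : u * a = -(a * u))
    (hv : v * a = -(a * v)) :
    a * ((v * a - a * v) + (u * (u * a - a * u) - (u * a - a * u) * u))
      - ((v * a - a * v) + (u * (u * a - a * u) - (u * a - a * u) * u)) * a = (-4 * c) • v := by
  have hau : ∀ w, a * (u * w) = -(u * (a * w)) := fun w => by
    rw [← mul_assoc, ← neg_neg (a * u), ← hu, neg_mul, mul_assoc]
  have hav : ∀ w, a * (v * w) = -(v * (a * w)) := fun w => by
    rw [← mul_assoc, ← neg_neg (a * v), ← hv, neg_mul, mul_assoc]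
  have haa : ∀ w, a * (a * w) = c • w := fun w => by
    rw [← mul_assoc, ha, smul_mul_assoc, one_mul]
  simp only [mul_sub, sub_mul, mul_add, add_mul, mul_neg, neg_mul, mul_assoc, hau, haa, hu, hv,
    mul_smul_comm, neg_neg]
  module

end Anticommutation

theorem conjTranspose_I_div_two_smul_fromBlocks {k m : Type*} [DecidableEq k] [DecidableEq m] :
    ((Complex.I / 2) • fromBlocks (1 : Matrix k k ℂ) 0 0 (-1 : Matrix m m ℂ))ᴴ
      = -((Complex.I / 2) • fromBlocks (1 : Matrix k k ℂ) 0 0 (-1 : Matrix m m ℂ)) := by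
  rw [conjTranspose_smul, fromBlocks_conjTranspose]
  simp [Complex.conj_I, ← neg_smul, neg_div]

theorem I_div_two_smul_fromBlocks_mul_self {k m : Type*} [Fintype k] [Fintype m] [DecidableEq k]
    [DecidableEq m] :
    (Complex.I / 2) • fromBlocks (1 : Matrix k k ℂ) 0 0 (-1 : Matrix m m ℂ)
      * (Complex.I / 2) • fromBlocks (1 : Matrix k k ℂ) 0 0 (-1 : Matrix m m ℂ)
      = ((-4⁻¹ : ℝ) : ℂ) • 1 := by
  rw [smul_mul_smul_comm, fromBlocks_multiply, ← fromBlocks_one]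
  simp only [Matrix.mul_one, Matrix.mul_zero, Matrix.mul_neg, add_zero, zero_add, neg_neg,
    neg_zero]
  congr 1
  rw [div_mul_div_comm, Complex.I_mul_I]
  push_cast
  norm_num

theorem stmt9_general (k m : ℕ)
    (a : Matrix (Fin k ⊕ Fin m) (Fin k ⊕ Fin m) ℂ)
    (ha : a = (Complex.I / 2) • Matrix.fromBlocks 1 0 0 (-1))
    (g : ℝ → Matrix (Fin k ⊕ Fin m) (Fin k ⊕ Fin m) ℂ)
    (hg : ContDiff ℝ (⊤ : ℕ∞) g)
    (hgU : ∀ x, g x ∈ Matrix.unitaryGroup (Fin k ⊕ Fin m) ℂ)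
    (u : ℝ → Matrix (Fin k ⊕ Fin m) (Fin k ⊕ Fin m) ℂ)
    (hu : ∀ x, u x = star (g x) * deriv g x)
    (huP : ∀ x, u x ∈ uPerp a)
    (γ : ℝ → Matrix (Fin k ⊕ Fin m) (Fin k ⊕ Fin m) ℂ)
    (hγ : ∀ x, γ x = g x * a * star (g x)) :
    -- γ_x = g [u,a] g⁻¹
    (∀ x, deriv γ x = g x * (u x * a - a * u x) * star (g x)) ∧
    -- γ_xx = g ([u_x,a] + [u,[u,a]]) g⁻¹
    (∀ x, deriv (deriv γ) x
        = g x * ((deriv u x * a - a * deriv u x)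
            + (u x * (u x * a - a * u x) - (u x * a - a * u x) * u x)) * star (g x)) ∧
    -- [γ, γ_xx] = g u_x g⁻¹
    (∀ x, γ x * deriv (deriv γ) x - deriv (deriv γ) x * γ x
        = g x * deriv u x * star (g x)) := by
  have hg' : ∀ x, HasDerivAt g (g x * u x) x := fun x => by
    rw [hu, ← mul_assoc, (hgU x).2, one_mul]
    exact (hg.differentiable (by simp) x).hasDerivAt
  have hu' : ∀ x, HasDerivAt u (deriv u x) x := fun x => by
    rw [funext hu]
    exact (differentiable_star_mul_deriv (hg.of_le (WithTop.coe_le_coe.2 le_top)) x).hasDerivAt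
  have huH : ∀ x, star (u x) = -u x := fun x => (huP x).1
  have hγ' : ∀ x, HasDerivAt γ (g x * (u x * a - a * u x) * star (g x)) x := fun x => by
    rw [funext hγ]
    exact ((hg' x).mul_mul_star (huH x) (hasDerivAt_const x a)).congr_deriv (by simp)
  have hγ'' : ∀ x, HasDerivAt (deriv γ) (g x * ((deriv u x * a - a * deriv u x)
      + (u x * (u x * a - a * u x) - (u x * a - a * u x) * u x)) * star (g x)) x := fun x => by
    rw [show deriv γ = _ from funext fun x => (hγ' x).deriv]
    refine (hg' x).mul_mul_star (huH x) (((hu' x).matrix_mul (hasDerivAt_const x a)).sub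
      ((hasDerivAt_const x a).matrix_mul (hu' x))) |>.congr_deriv ?_
    simp
  have haH : aᴴ = -a := ha ▸ conjTranspose_I_div_two_smul_fromBlocks
  have haa : a * a = ((-4⁻¹ : ℝ) : ℂ) • 1 := ha ▸ I_div_two_smul_fromBlocks_mul_self
  have hanti : ∀ x, u x * a = -(a * u x) := fun x =>
    mul_eq_neg_mul_of_mem_uPerp (by norm_num) haH haa (huP x)
  refine ⟨fun x => (hγ' x).deriv, fun x => (hγ'' x).deriv, fun x => ?_⟩
  rw [show deriv (deriv γ) x = _ from (hγ'' x).deriv, hγ x,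
    commutator_conj_of_mul_eq_one (hgU x).1,
    commutator_add_double_commutator_of_anticomm haa (hanti x)
      ((hu' x).mul_eq_neg_mul_of_forall hanti)]
  norm_num

/-- for `a = (i/2)·diag(I_k, −I_{n−k})`, `g : ℝ → U(n)` smooth with
`u := g⁻¹g_x` taking values in `u(n)_a^⊥`, and `γ := g a g⁻¹`, one has
`γ_x = g[u,a]g⁻¹`, `γ_xx = g([u_x,a] + [u,[u,a]])g⁻¹`, and `[γ, γ_xx] = g u_x g⁻¹`. -/
theorem stmt9 (k m : ℕ) (hk : 0 < k) (hm : 0 < m)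
    (a : Matrix (Fin k ⊕ Fin m) (Fin k ⊕ Fin m) ℂ)
    (ha : a = (Complex.I / 2) • Matrix.fromBlocks 1 0 0 (-1))
    (g : ℝ → Matrix (Fin k ⊕ Fin m) (Fin k ⊕ Fin m) ℂ)
    (hg : ContDiff ℝ (⊤ : ℕ∞) g)
    (hgU : ∀ x, g x ∈ Matrix.unitaryGroup (Fin k ⊕ Fin m) ℂ)
    (u : ℝ → Matrix (Fin k ⊕ Fin m) (Fin k ⊕ Fin m) ℂ)
    (hu : ∀ x, u x = star (g x) * deriv g x)
    (huP : ∀ x, u x ∈ uPerp a)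
    (γ : ℝ → Matrix (Fin k ⊕ Fin m) (Fin k ⊕ Fin m) ℂ)
    (hγ : ∀ x, γ x = g x * a * star (g x)) :
    -- γ_x = g [u,a] g⁻¹
    (∀ x, deriv γ x = g x * (u x * a - a * u x) * star (g x)) ∧
    -- γ_xx = g ([u_x,a] + [u,[u,a]]) g⁻¹
    (∀ x, deriv (deriv γ) x
        = g x * ((deriv u x * a - a * deriv u x)
            + (u x * (u x * a - a * u x) - (u x * a - a * u x) * u x)) * star (g x)) ∧
    -- [γ, γ_xx] = g u_x g⁻¹
    (∀ x, γ x * deriv (deriv γ) x - deriv (deriv γ) x * γ x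
        = g x * deriv u x * star (g x)) :=
  stmt9_general k m a ha g hg hgU u hu huP γ hγ
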